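/- arXiv:2402.03205 — 4 statements merged into one kernel-verified Lean document; each statement's English description precedes it below -/
import Mathlib

section
/- Every 2×2 matrix A whose rows have ℓ² norm at most 1 satisfies β(A) ≤ √2, i.e., Σ_{x ∈ {-1,1}²} ‖Ax‖_∞ ≤ 4√2. -/
open Matrix Finset

/-- The ±1 vector associated to a Boolean sign pattern. -/
noncomputable def signVec {n : ℕ} (σ : Fin n → Bool) : Fin n → ℝ :=
  fun i => if σ i then 1 else -1

/-- The ℓ^∞ norm (maximum absolute coordinate) of a vector. -/
noncomputable def supNorm {n : ℕ} (v : Fin n → ℝ) : ℝ := ⨆ i, |v i|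

/-- β(A) = 2^{-n} Σ_{x ∈ {-1,1}^n} ‖Ax‖_∞. -/
noncomputable def beta {n : ℕ} (A : Matrix (Fin n) (Fin n) ℝ) : ℝ :=
  (2 ^ n : ℝ)⁻¹ * ∑ σ : Fin n → Bool, supNorm (A.mulVec (signVec σ))

/-!
For every sign vector `x` and every row `a` of `A`, `|⟪a, x⟫| ≤ ‖a‖₁ ≤ √n ‖a‖₂ ≤ √n` by
Cauchy–Schwarz, so `‖Ax‖_∞ ≤ √n`; summing over the `2ⁿ` sign vectors gives `2ⁿ √n`,
which for `n = 2` is `4 √2`.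
-/

lemma abs_signVec {n : ℕ} (σ : Fin n → Bool) (i : Fin n) : |signVec σ i| = 1 := by
  unfold signVec
  split <;> simp

lemma supNorm_le {n : ℕ} {v : Fin n → ℝ} {c : ℝ} (hv : ∀ i, |v i| ≤ c) (hc : 0 ≤ c) :
    supNorm v ≤ c :=
  Real.iSup_le hv hc

lemma abs_dotProduct_signVec_le {n : ℕ} (a : Fin n → ℝ) (σ : Fin n → Bool) :
    |a ⬝ᵥ signVec σ| ≤ ∑ j, |a j| :=
  calc |∑ j, a j * signVec σ j| ≤ ∑ j, |a j * signVec σ j| := abs_sum_le_sum_abs _ _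
    _ = ∑ j, |a j| := by simp only [abs_mul, abs_signVec, mul_one]

lemma sum_abs_le_sqrt_card {n : ℕ} {a : Fin n → ℝ} (ha : ∑ j, a j ^ 2 ≤ 1) :
    ∑ j, |a j| ≤ √n :=
  calc ∑ j, |a j| = ∑ j, 1 * |a j| := by simp only [one_mul]
    _ ≤ √(∑ _j : Fin n, (1 : ℝ) ^ 2) * √(∑ j, |a j| ^ 2) :=
        Real.sum_mul_le_sqrt_mul_sqrt _ _ _
    _ ≤ √n * 1 := by
        gcongr
        · simp
        · simpa only [sq_abs, Real.sqrt_le_one] using ha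
    _ = √n := mul_one _

lemma supNorm_mulVec_signVec_le {m n : ℕ} {A : Matrix (Fin m) (Fin n) ℝ}
    (hrows : ∀ i, ∑ j, A i j ^ 2 ≤ 1) (σ : Fin n → Bool) :
    supNorm (A *ᵥ signVec σ) ≤ √n :=
  supNorm_le (fun i => (abs_dotProduct_signVec_le (A i) σ).trans (sum_abs_le_sqrt_card (hrows i)))
    (Real.sqrt_nonneg _)

lemma sum_supNorm_mulVec_signVec_le {m n : ℕ} {A : Matrix (Fin m) (Fin n) ℝ}
    (hrows : ∀ i, ∑ j, A i j ^ 2 ≤ 1) :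
    ∑ σ : Fin n → Bool, supNorm (A *ᵥ signVec σ) ≤ 2 ^ n * √n :=
  calc ∑ σ : Fin n → Bool, supNorm (A *ᵥ signVec σ) ≤ ∑ _σ : Fin n → Bool, √n :=
        sum_le_sum fun σ _ => supNorm_mulVec_signVec_le hrows σ
    _ = 2 ^ n * √n := by simp

theorem beta_le_sqrt_two_of_rows_le_one (A : Matrix (Fin 2) (Fin 2) ℝ)
    (hrows : ∀ i, ∑ j, A i j ^ 2 ≤ 1) :
    (∑ σ : Fin 2 → Bool, supNorm (A.mulVec (signVec σ))) ≤ 4 * Real.sqrt 2 := by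
  calc _ ≤ 2 ^ 2 * √(2 : ℕ) := sum_supNorm_mulVec_signVec_le hrows
    _ = 4 * √2 := by norm_num
end

section
/- For the 4×4 matrix A = (1/√3)·[[0,1,-1,1],[1,-1,0,1],[-1,-1,-1,0],[-1,0,1,1]], one has ‖Ax‖_∞ = √3 for every x ∈ {-1,1}⁴, and hence β(A) = √3. -/
/-!
Write `A4 = B4 / √3` with `B4` the `0, ±1` matrix in the definition. Every row of `B4` has
three nonzero entries, so for a sign vector `x` each coordinate of `B4 x` is a sum of three signs,
hence `±1` or `±3`. The columns of `B4` are orthogonal of squared length `3`, so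
`‖B4 x‖₂² = 3 ‖x‖₂² = 12 > 4`, and some coordinate must be `±3`. Thus `‖B4 x‖_∞ = 3` and
`‖A4 x‖_∞ = √3` for every sign vector, which is then also the average `β(A4)`.
-/

open Matrix Finset

noncomputable def A4 : Matrix (Fin 4) (Fin 4) ℝ :=
  (Real.sqrt 3)⁻¹ • !![0, 1, -1, 1; 1, -1, 0, 1; -1, -1, -1, 0; -1, 0, 1, 1]

section General

variable {n : ℕ}

lemma supNorm_smul (c : ℝ) (v : Fin n → ℝ) : supNorm (c • v) = |c| * supNorm v := by
  simp only [supNorm, Pi.smul_apply, smul_eq_mul, abs_mul, Real.mul_iSup_of_nonneg (abs_nonneg c)]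

lemma supNorm_eq_of_abs_le {v : Fin n → ℝ} {c : ℝ} (hle : ∀ i, |v i| ≤ c) (i : Fin n)
    (hi : |v i| = c) : supNorm v = c :=
  have : Nonempty (Fin n) := ⟨i⟩
  le_antisymm (ciSup_le hle) (hi ▸ le_ciSup (Finite.bddAbove_range fun j => |v j|) i)

lemma beta_eq_of_forall_supNorm_eq {A : Matrix (Fin n) (Fin n) ℝ} {c : ℝ}
    (h : ∀ σ, supNorm (A *ᵥ signVec σ) = c) : beta A = c := by
  simp only [beta, h, sum_const, card_univ, Fintype.card_fun, Fintype.card_bool,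
    Fintype.card_fin, nsmul_eq_mul, Nat.cast_pow, Nat.cast_ofNat]
  field_simp

lemma signVec_sq (σ : Fin n → Bool) (i : Fin n) : signVec σ i ^ 2 = 1 := by
  unfold signVec; split_ifs <;> norm_num

lemma signVec_dotProduct_self (σ : Fin n → Bool) : signVec σ ⬝ᵥ signVec σ = n := by
  simp [dotProduct, ← sq, signVec_sq]

lemma dotProduct_self_mulVec_of_transpose_mul_self {B : Matrix (Fin n) (Fin n) ℝ} {c : ℝ}
    (hB : Bᵀ * B = c • 1) (x : Fin n → ℝ) : B *ᵥ x ⬝ᵥ B *ᵥ x = c * (x ⬝ᵥ x) := by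
  rw [dotProduct_mulVec, ← mulVec_transpose, mulVec_mulVec, hB, smul_mulVec, one_mulVec,
    smul_dotProduct, smul_eq_mul]

lemma abs_add_add_eq_one_or_three {a b c : ℝ} (ha : a ^ 2 = 1) (hb : b ^ 2 = 1) (hc : c ^ 2 = 1) :
    |a + b + c| = 1 ∨ |a + b + c| = 3 := by
  rcases sq_eq_one_iff.mp ha with rfl | rfl <;> rcases sq_eq_one_iff.mp hb with rfl | rfl <;>
    rcases sq_eq_one_iff.mp hc with rfl | rfl <;> norm_num

lemma exists_abs_eq_three {v : Fin n → ℝ} (hv : ∀ i, |v i| = 1 ∨ |v i| = 3)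
    (hsum : (n : ℝ) < v ⬝ᵥ v) : ∃ i, |v i| = 3 := by
  by_contra! hne
  have hsq : ∀ i, v i * v i = 1 := fun i => by
    rw [← abs_mul_abs_self, (hv i).resolve_right (hne i), one_mul]
  simp [dotProduct, hsq] at hsum

end General

noncomputable def B4 : Matrix (Fin 4) (Fin 4) ℝ :=
  !![0, 1, -1, 1; 1, -1, 0, 1; -1, -1, -1, 0; -1, 0, 1, 1]

lemma A4_eq_smul_B4 : A4 = (Real.sqrt 3)⁻¹ • B4 := rfl

lemma B4_transpose_mul_self : B4ᵀ * B4 = (3 : ℝ) • 1 := by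
  ext i j
  fin_cases i <;> fin_cases j <;> simp [B4, mul_apply, Fin.sum_univ_four, one_apply] <;> norm_num

lemma B4_mulVec (x : Fin 4 → ℝ) :
    B4 *ᵥ x = ![x 1 - x 2 + x 3, x 0 - x 1 + x 3, -x 0 - x 1 - x 2, -x 0 + x 2 + x 3] := by
  ext i
  fin_cases i <;> simp [B4, mulVec, dotProduct, Fin.sum_univ_four] <;> ring

lemma abs_B4_mulVec_signVec (σ : Fin 4 → Bool) (i : Fin 4) :
    |(B4 *ᵥ signVec σ) i| = 1 ∨ |(B4 *ᵥ signVec σ) i| = 3 := by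
  have h := signVec_sq σ
  have hneg : ∀ j, (-signVec σ j) ^ 2 = 1 := fun j => by rw [neg_sq, h]
  rw [B4_mulVec]
  fin_cases i
  · simpa [sub_eq_add_neg] using abs_add_add_eq_one_or_three (h 1) (hneg 2) (h 3)
  · simpa [sub_eq_add_neg] using abs_add_add_eq_one_or_three (h 0) (hneg 1) (h 3)
  · simpa [sub_eq_add_neg] using abs_add_add_eq_one_or_three (hneg 0) (hneg 1) (hneg 2)
  · simpa using abs_add_add_eq_one_or_three (hneg 0) (h 2) (h 3)

lemma supNorm_B4_mulVec_signVec (σ : Fin 4 → Bool) : supNorm (B4 *ᵥ signVec σ) = 3 := by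
  have hsum : B4 *ᵥ signVec σ ⬝ᵥ B4 *ᵥ signVec σ = 12 := by
    rw [dotProduct_self_mulVec_of_transpose_mul_self B4_transpose_mul_self,
      signVec_dotProduct_self]
    norm_num
  obtain ⟨i, hi⟩ := exists_abs_eq_three (abs_B4_mulVec_signVec σ) (by rw [hsum]; norm_num)
  refine supNorm_eq_of_abs_le (fun j => ?_) i hi
  rcases abs_B4_mulVec_signVec σ j with h | h <;> norm_num [h]

theorem bad_science_n4 :
    (∀ σ : Fin 4 → Bool, supNorm (A4.mulVec (signVec σ)) = Real.sqrt 3) ∧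
    beta A4 = Real.sqrt 3 := by
  have hA4 : ∀ σ : Fin 4 → Bool, supNorm (A4.mulVec (signVec σ)) = Real.sqrt 3 := by
    intro σ
    rw [A4_eq_smul_B4, smul_mulVec, supNorm_smul, supNorm_B4_mulVec_signVec,
      abs_of_pos (by positivity), inv_mul_eq_div, Real.div_sqrt]
  exact ⟨hA4, beta_eq_of_forall_supNorm_eq hA4⟩
end

section
/- With A_n defined recursively by A_0 = (1) and A_{n+1} = [[A_n, Id_{2^n}],[A_n, -Id_{2^n}]], and B_n = A_n/√(n+1), every row of B_n has ℓ² norm 1 and 2^{-2^n} · Σ_{x ∈ {-1,1}^{2^n}} ‖B_n x‖_∞ = √(n+1). -/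
open Matrix Finset

/-- The recursively defined Haar-type matrices: A₀ = (1),
A_{n+1} = [[Aₙ, Id],[Aₙ, -Id]]. -/
noncomputable def haarA : (n : ℕ) → Matrix (Fin (2 ^ n)) (Fin (2 ^ n)) ℝ
  | 0 => 1
  | n + 1 =>
      Matrix.reindex (finSumFinEquiv.trans (finCongr (by rw [pow_succ, mul_two])))
        (finSumFinEquiv.trans (finCongr (by rw [pow_succ, mul_two])))
        (Matrix.fromBlocks (haarA n) 1 (haarA n) (-1))

noncomputable def haarB (n : ℕ) : Matrix (Fin (2 ^ n)) (Fin (2 ^ n)) ℝ :=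
  (Real.sqrt (n + 1))⁻¹ • haarA n

lemma haarA_key (n : ℕ) :
    (∀ i, ∑ j, |haarA n i j| = n + 1) ∧
    (∀ i, ∑ j, (haarA n i j)^2 = n + 1) ∧
    (∀ σ : Fin (2^n) → Bool, ∃ i, |(haarA n).mulVec (signVec σ) i| = n + 1) := by
  induction n with
  | zero =>
    refine ⟨?_, ?_, ?_⟩
    · intro i
      simp [haarA, Matrix.one_apply, apply_ite]
      omega
    · intro i
      simp [haarA, Matrix.one_apply, apply_ite]
      omega
    · intro σ
      refine ⟨0, ?_⟩
      simp [haarA, signVec, Matrix.one_mulVec]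
      split <;> norm_num
  | succ n ih =>
    obtain ⟨h1, h2, h3⟩ := ih
    set e : (Fin (2^n) ⊕ Fin (2^n)) ≃ Fin (2^(n+1)) :=
      finSumFinEquiv.trans (finCongr (by rw [pow_succ, mul_two])) with he
    have hA : haarA (n+1) = Matrix.reindex e e
        (Matrix.fromBlocks (haarA n) 1 (haarA n) (-1)) := rfl
    have hsum : ∀ f : Fin (2^(n+1)) → ℝ,
        ∑ j, f j = (∑ j, f (e (Sum.inl j))) + ∑ j, f (e (Sum.inr j)) := by
      intro f
      rw [← Equiv.sum_comp e f, Fintype.sum_sum_type]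
    have hentry : ∀ (i : Fin (2^(n+1))) (s : Fin (2^n) ⊕ Fin (2^n)),
        haarA (n+1) i (e s) =
          Matrix.fromBlocks (haarA n) 1 (haarA n) (-1) (e.symm i) s := by
      intro i s
      rw [hA]
      simp
    refine ⟨?_, ?_, ?_⟩
    · intro i
      rw [hsum]
      rcases hs : e.symm i with i0 | i0 <;>
        simp only [hentry, hs, Matrix.fromBlocks_apply₁₁, Matrix.fromBlocks_apply₁₂,
          Matrix.fromBlocks_apply₂₁, Matrix.fromBlocks_apply₂₂, Matrix.neg_apply, abs_neg] <;>
        rw [h1 i0] <;> push_cast <;>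
        simp [Matrix.one_apply, apply_ite abs]
    · intro i
      rw [hsum]
      rcases hs : e.symm i with i0 | i0 <;>
        simp only [hentry, hs, Matrix.fromBlocks_apply₁₁, Matrix.fromBlocks_apply₁₂,
          Matrix.fromBlocks_apply₂₁, Matrix.fromBlocks_apply₂₂, Matrix.neg_apply, neg_sq] <;>
        rw [h2 i0] <;> push_cast <;>
        simp [Matrix.one_apply, apply_ite (· ^ 2)]
    · intro σ
      set σ₁ : Fin (2^n) → Bool := fun j => σ (e (Sum.inl j)) with hσ₁
      set σ₂ : Fin (2^n) → Bool := fun j => σ (e (Sum.inr j)) with hσ₂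
      have hmv : ∀ s, (haarA (n+1)).mulVec (signVec σ) (e s) =
          Sum.elim ((haarA n).mulVec (signVec σ₁) + signVec σ₂)
            ((haarA n).mulVec (signVec σ₁) - signVec σ₂) s := by
        intro s
        rw [hA, Matrix.reindex_apply, Matrix.submatrix_mulVec_equiv]
        have hx : signVec σ ∘ ⇑e.symm.symm = Sum.elim (signVec σ₁) (signVec σ₂) := by
          funext t
          rcases t with t | t <;> simp [signVec, hσ₁, hσ₂]
        rw [hx, Matrix.fromBlocks_mulVec]
        simp only [Function.comp_apply, Equiv.symm_apply_apply]
        rcases s with t | t <;>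
          simp [Matrix.one_mulVec, Matrix.neg_mulVec, sub_eq_add_neg]
      obtain ⟨i0, hi0⟩ := h3 σ₁
      rcases (abs_eq (by positivity)).mp hi0 with h | h <;> rcases hb : σ₂ i0 with _ | _
      · refine ⟨e (Sum.inr i0), ?_⟩
        rw [hmv]
        simp only [Sum.elim_inr, Pi.sub_apply, signVec, hb, Bool.false_eq_true, eq_self_iff_true, if_false, if_true, h]
        rw [abs_of_nonneg (by linarith [Nat.cast_nonneg (α := ℝ) n])]; push_cast; ring
      · refine ⟨e (Sum.inl i0), ?_⟩
        rw [hmv]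
        simp only [Sum.elim_inl, Pi.add_apply, signVec, hb, Bool.false_eq_true, eq_self_iff_true, if_false, if_true, h]
        rw [abs_of_nonneg (by linarith [Nat.cast_nonneg (α := ℝ) n])]; push_cast; ring
      · refine ⟨e (Sum.inl i0), ?_⟩
        rw [hmv]
        simp only [Sum.elim_inl, Pi.add_apply, signVec, hb, Bool.false_eq_true, eq_self_iff_true, if_false, if_true, h]
        rw [abs_of_nonpos (by linarith [Nat.cast_nonneg (α := ℝ) n])]; push_cast; ring
      · refine ⟨e (Sum.inr i0), ?_⟩
        rw [hmv]
        simp only [Sum.elim_inr, Pi.sub_apply, signVec, hb, Bool.false_eq_true, eq_self_iff_true, if_false, if_true, h]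
        rw [abs_of_nonpos (by linarith [Nat.cast_nonneg (α := ℝ) n])]; push_cast; ring

lemma haarA_mulVec_abs_le (n : ℕ) (σ : Fin (2^n) → Bool) (i : Fin (2^n)) :
    |(haarA n).mulVec (signVec σ) i| ≤ n + 1 := by
  calc |(haarA n).mulVec (signVec σ) i|
      = |∑ j, haarA n i j * signVec σ j| := by rw [Matrix.mulVec, dotProduct]
    _ ≤ ∑ j, |haarA n i j * signVec σ j| := Finset.abs_sum_le_sum_abs _ _
    _ = ∑ j, |haarA n i j| := by
        refine Finset.sum_congr rfl fun j _ => ?_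
        rw [abs_mul]
        have : |signVec σ j| = 1 := by simp [signVec]; split <;> norm_num
        rw [this, mul_one]
    _ = n + 1 := (haarA_key n).1 i

lemma supNorm_haarA (n : ℕ) (σ : Fin (2^n) → Bool) :
    supNorm ((haarA n).mulVec (signVec σ)) = n + 1 := by
  obtain ⟨i0, hi0⟩ := (haarA_key n).2.2 σ
  refine le_antisymm (ciSup_le fun i => haarA_mulVec_abs_le n σ i) ?_
  rw [← hi0]
  exact le_ciSup (f := fun i => |(haarA n).mulVec (signVec σ) i|) (Finite.bddAbove_range _) i0

lemma sqrt_succ_pos (n : ℕ) : 0 < Real.sqrt (n + 1) :=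
  Real.sqrt_pos.mpr (by positivity)

lemma supNorm_haarB (n : ℕ) (σ : Fin (2^n) → Bool) :
    supNorm ((haarB n).mulVec (signVec σ)) = Real.sqrt (n + 1) := by
  have hc : (0:ℝ) < Real.sqrt (n + 1) := sqrt_succ_pos n
  have hmul : Real.sqrt (n+1) * Real.sqrt (n+1) = n + 1 :=
    Real.mul_self_sqrt (by positivity)
  have hv : (haarB n).mulVec (signVec σ) =
      (Real.sqrt (n + 1))⁻¹ • (haarA n).mulVec (signVec σ) := by
    rw [haarB, Matrix.smul_mulVec]
  have : supNorm ((haarB n).mulVec (signVec σ)) =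
      (Real.sqrt (n + 1))⁻¹ * supNorm ((haarA n).mulVec (signVec σ)) := by
    rw [hv, supNorm, supNorm]
    have habs : ∀ i, |((Real.sqrt (n + 1))⁻¹ • (haarA n).mulVec (signVec σ)) i| =
        (Real.sqrt (n + 1))⁻¹ * |(haarA n).mulVec (signVec σ) i| := fun i => by
      rw [Pi.smul_apply, smul_eq_mul, abs_mul, abs_of_nonneg (by positivity)]
    simp only [habs]
    rw [← Real.mul_iSup_of_nonneg (by positivity)]
  rw [this, supNorm_haarA]
  field_simp
  rw [sq, hmul]


theorem haarB_beta (n : ℕ) :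
    (∀ i, Real.sqrt (∑ j, haarB n i j ^ 2) = 1) ∧
    beta (haarB n) = Real.sqrt (n + 1) := by
  constructor
  · intro i
    have hmul : Real.sqrt (n+1) * Real.sqrt (n+1) = n + 1 :=
      Real.mul_self_sqrt (by positivity)
    have hc : (0:ℝ) < Real.sqrt (n + 1) := sqrt_succ_pos n
    have : ∑ j, haarB n i j ^ 2 = 1 := by
      have : ∑ j, haarB n i j ^ 2 =
          ((Real.sqrt (n + 1))⁻¹)^2 * ∑ j, (haarA n i j)^2 := by
        rw [Finset.mul_sum]
        refine Finset.sum_congr rfl fun j _ => ?_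
        rw [haarB]
        simp [mul_pow]
      rw [this, (haarA_key n).2.1 i]
      field_simp
      rw [sq, hmul]
    rw [this, Real.sqrt_one]
  · rw [beta]
    have hs : ∀ σ : Fin (2^n) → Bool,
        supNorm ((haarB n).mulVec (signVec σ)) = Real.sqrt (n + 1) :=
      supNorm_haarB n
    rw [Finset.sum_congr rfl fun σ _ => hs σ, Finset.sum_const, Finset.card_univ]
    simp [Fintype.card_fun]
end

section
/- For a matrix A ∈ ℝ^{n×n} whose rows all have ℓ² norm at most 1, β(A) = 2^{-n} Σ_{x ∈ {-1,1}^n} ‖Ax‖_∞ ≤ √((2+ε) log n) + Σ_{k≥3} n^{1-k/2}·√((k+1) log n) + o(1); in particular, limsup_{n→∞} β_n / √(2 log n) ≤ 1, where β_n is the maximum of β(A) over all such A. -/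
open Matrix Finset

/-- The maximum of β(A) over matrices with all rows of ℓ² norm at most 1. -/
noncomputable def betaMax (n : ℕ) : ℝ :=
  sSup {b | ∃ A : Matrix (Fin n) (Fin n) ℝ, (∀ i, ∑ j, A i j ^ 2 ≤ 1) ∧ b = beta A}

lemma avg_exp {n : ℕ} (c : Fin n → ℝ) :
    (2 ^ n : ℝ)⁻¹ * ∑ σ : Fin n → Bool, Real.exp (∑ j, c j * signVec σ j)
      = ∏ j, Real.cosh (c j) := by
  have h1 : ∀ σ : Fin n → Bool, Real.exp (∑ j, c j * signVec σ j)
      = ∏ j, Real.exp (c j * (if σ j then (1:ℝ) else -1)) := by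
    intro σ; rw [Real.exp_sum]; rfl
  simp_rw [h1]
  rw [← Fintype.prod_sum (f := fun j (b : Bool) => Real.exp (c j * (if b then (1:ℝ) else -1)))]
  have h2 : ∀ j, (∑ b : Bool, Real.exp (c j * (if b then (1:ℝ) else -1)))
      = 2 * Real.cosh (c j) := by
    intro j
    rw [Fintype.sum_bool]
    simp [Real.cosh_eq]
    ring
  simp_rw [h2]
  rw [Finset.prod_mul_distrib, Finset.prod_const]
  simp

lemma cosh_prod_le {n : ℕ} (t : ℝ) (a : Fin n → ℝ) (ha : ∑ j, a j ^ 2 ≤ 1) :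
    ∏ j, Real.cosh (t * a j) ≤ Real.exp (t ^ 2 / 2) := by
  calc ∏ j, Real.cosh (t * a j) ≤ ∏ j, Real.exp ((t * a j) ^ 2 / 2) := by
        apply Finset.prod_le_prod (fun j _ => (Real.cosh_pos _).le)
        exact fun j _ => Real.cosh_le_exp_half_sq _
    _ = Real.exp (∑ j, (t * a j) ^ 2 / 2) := (Real.exp_sum _ _).symm
    _ ≤ Real.exp (t ^ 2 / 2) := by
        apply Real.exp_le_exp.2
        have hs : ∑ j, (t * a j) ^ 2 = t ^ 2 * ∑ j, a j ^ 2 := by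
          rw [Finset.mul_sum]; exact Finset.sum_congr rfl (fun j _ => by ring)
        rw [← Finset.sum_div, hs]
        nlinarith [sq_nonneg t]

set_option maxHeartbeats 1000000 in
lemma beta_le {n : ℕ} (hn : 1 ≤ n) (A : Matrix (Fin n) (Fin n) ℝ)
    (hA : ∀ i, ∑ j, A i j ^ 2 ≤ 1) :
    beta A ≤ Real.sqrt (2 * Real.log (2 * n)) := by
  have hn' : (1:ℝ) ≤ (n:ℝ) := by exact_mod_cast hn
  have h2n : (1:ℝ) < 2 * n := by nlinarith
  have hlog : 0 < Real.log (2 * n) := Real.log_pos h2n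
  set t : ℝ := Real.sqrt (2 * Real.log (2 * n)) with ht_def
  have ht : 0 < t := Real.sqrt_pos.2 (by linarith)
  have ht2 : t ^ 2 = 2 * Real.log (2 * n) := Real.sq_sqrt (by linarith)
  have hw : ∑ _σ : Fin n → Bool, (2 ^ n : ℝ)⁻¹ = 1 := by
    rw [Finset.sum_const, card_univ, Fintype.card_fun]
    simp
  -- Jensen
  have hjensen : Real.exp (t * beta A) ≤
      ∑ σ : Fin n → Bool, (2 ^ n : ℝ)⁻¹ * Real.exp (t * supNorm (A.mulVec (signVec σ))) := by
    have := convexOn_exp.map_sum_le (t := Finset.univ) (p := fun σ : Fin n → Bool =>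
        t * supNorm (A.mulVec (signVec σ))) (w := fun _ => (2 ^ n : ℝ)⁻¹)
      (fun _ _ => by positivity) hw (fun _ _ => Set.mem_univ _)
    simpa [beta, smul_eq_mul, Finset.mul_sum, mul_comm, mul_assoc, mul_left_comm] using this
  -- pointwise bound
  have hpt : ∀ σ : Fin n → Bool, Real.exp (t * supNorm (A.mulVec (signVec σ))) ≤
      ∑ i : Fin n, (Real.exp (t * A.mulVec (signVec σ) i) +
        Real.exp (-(t * A.mulVec (signVec σ) i))) := by
    intro σ
    set u := A.mulVec (signVec σ)
    haveI : Nonempty (Fin n) := Fin.pos_iff_nonempty.mp hn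
    obtain ⟨i₀, hi₀⟩ := Finite.exists_max (fun i => |u i|)
    have hsup : supNorm u ≤ |u i₀| := ciSup_le hi₀
    have h1 : Real.exp (t * supNorm u) ≤ Real.exp (t * |u i₀|) :=
      Real.exp_le_exp.2 (mul_le_mul_of_nonneg_left hsup ht.le)
    have h2 : Real.exp (t * |u i₀|) ≤ Real.exp (t * u i₀) + Real.exp (-(t * u i₀)) := by
      rcases abs_cases (u i₀) with ⟨h, _⟩ | ⟨h, _⟩
      · rw [h]; exact le_add_of_nonneg_right (Real.exp_pos _).le
      · rw [h, mul_neg]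
        exact le_add_of_nonneg_left (Real.exp_pos _).le
    calc Real.exp (t * supNorm u) ≤ Real.exp (t * u i₀) + Real.exp (-(t * u i₀)) :=
          h1.trans h2
      _ ≤ ∑ i : Fin n, (Real.exp (t * u i) + Real.exp (-(t * u i))) := by
          apply Finset.single_le_sum (f := fun i => Real.exp (t * u i) + Real.exp (-(t * u i)))
            (fun i _ => by positivity) (Finset.mem_univ i₀)
  -- key per-row bound
  have hkey : ∀ i : Fin n,
      (2 ^ n : ℝ)⁻¹ * ∑ σ : Fin n → Bool,
        (Real.exp (t * A.mulVec (signVec σ) i) + Real.exp (-(t * A.mulVec (signVec σ) i)))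
      ≤ 2 * Real.exp (t ^ 2 / 2) := by
    intro i
    have e1 : ∀ σ : Fin n → Bool,
        t * A.mulVec (signVec σ) i = ∑ j, (t * A i j) * signVec σ j := by
      intro σ
      simp only [Matrix.mulVec, dotProduct, Finset.mul_sum]
      exact Finset.sum_congr rfl fun j _ => by ring
    have e2 : ∀ σ : Fin n → Bool,
        -(t * A.mulVec (signVec σ) i) = ∑ j, (-(t * A i j)) * signVec σ j := by
      intro σ
      rw [e1 σ, ← Finset.sum_neg_distrib]
      exact Finset.sum_congr rfl fun j _ => by ring
    have hp := avg_exp (fun j => t * A i j)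
    have hm := avg_exp (fun j => -(t * A i j))
    simp_rw [Real.cosh_neg] at hm
    calc (2 ^ n : ℝ)⁻¹ * ∑ σ : Fin n → Bool,
        (Real.exp (t * A.mulVec (signVec σ) i) + Real.exp (-(t * A.mulVec (signVec σ) i)))
        = (2 ^ n : ℝ)⁻¹ * ∑ σ : Fin n → Bool,
            Real.exp (∑ j, (t * A i j) * signVec σ j)
          + (2 ^ n : ℝ)⁻¹ * ∑ σ : Fin n → Bool,
            Real.exp (∑ j, (-(t * A i j)) * signVec σ j) := by
          rw [Finset.sum_add_distrib, mul_add]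
          congr 1
          · congr 1; exact Finset.sum_congr rfl fun σ _ => by rw [e1 σ]
          · congr 1; exact Finset.sum_congr rfl fun σ _ => by rw [e2 σ]
      _ = (∏ j, Real.cosh (t * A i j)) + (∏ j, Real.cosh (t * A i j)) := by rw [hp, hm]
      _ ≤ Real.exp (t ^ 2 / 2) + Real.exp (t ^ 2 / 2) := by
          have := cosh_prod_le t (A i) (hA i)
          linarith
      _ = 2 * Real.exp (t ^ 2 / 2) := by ring
  -- combine
  have hmain : Real.exp (t * beta A) ≤ Real.exp (t * t) := by
    calc Real.exp (t * beta A)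
        ≤ ∑ σ : Fin n → Bool, (2 ^ n : ℝ)⁻¹ *
            Real.exp (t * supNorm (A.mulVec (signVec σ))) := hjensen
      _ ≤ ∑ σ : Fin n → Bool, (2 ^ n : ℝ)⁻¹ *
            ∑ i : Fin n, (Real.exp (t * A.mulVec (signVec σ) i) +
              Real.exp (-(t * A.mulVec (signVec σ) i))) := by
          exact Finset.sum_le_sum fun σ _ =>
            mul_le_mul_of_nonneg_left (hpt σ) (by positivity)
      _ = ∑ i : Fin n, (2 ^ n : ℝ)⁻¹ *
            ∑ σ : Fin n → Bool, (Real.exp (t * A.mulVec (signVec σ) i) +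
              Real.exp (-(t * A.mulVec (signVec σ) i))) := by
          rw [← Finset.mul_sum, ← Finset.mul_sum, Finset.sum_comm]
      _ ≤ ∑ _i : Fin n, 2 * Real.exp (t ^ 2 / 2) := Finset.sum_le_sum fun i _ => hkey i
      _ = (n : ℝ) * (2 * Real.exp (t ^ 2 / 2)) := by
          rw [Finset.sum_const, card_univ, Fintype.card_fin, nsmul_eq_mul]
      _ = Real.exp (Real.log (2 * n) + t ^ 2 / 2) := by
          rw [Real.exp_add, Real.exp_log (by linarith)]; ring
      _ = Real.exp (t * t) := by
          congr 1
          nlinarith [ht2]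
  have := Real.exp_le_exp.1 hmain
  exact le_of_mul_le_mul_left this ht

lemma betaMax_le {n : ℕ} (hn : 1 ≤ n) :
    betaMax n ≤ Real.sqrt (2 * Real.log (2 * n)) := by
  apply Real.sSup_le _ (Real.sqrt_nonneg _)
  rintro b ⟨A, hA, rfl⟩
  exact beta_le hn A hA

lemma betaMax_nonneg {n : ℕ} (hn : 1 ≤ n) : 0 ≤ betaMax n := by
  haveI : Nonempty (Fin n) := Fin.pos_iff_nonempty.mp hn
  have h0 : (0 : ℝ) ∈ {b | ∃ A : Matrix (Fin n) (Fin n) ℝ,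
      (∀ i, ∑ j, A i j ^ 2 ≤ 1) ∧ b = beta A} := by
    refine ⟨0, fun i => by simp, ?_⟩
    simp [beta, supNorm, Matrix.zero_mulVec, ciSup_const]
  have hbdd : BddAbove {b | ∃ A : Matrix (Fin n) (Fin n) ℝ,
      (∀ i, ∑ j, A i j ^ 2 ≤ 1) ∧ b = beta A} := by
    refine ⟨Real.sqrt (2 * Real.log (2 * n)), ?_⟩
    rintro b ⟨A, hA, rfl⟩
    exact beta_le hn A hA
  exact le_csSup hbdd h0

lemma log_tendsto : Filter.Tendsto (fun n : ℕ => Real.log n) Filter.atTop Filter.atTop :=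
  Real.tendsto_log_atTop.comp tendsto_natCast_atTop_atTop

theorem upper_bound_asymptotics :
    (∀ ε : ℝ, 0 < ε → ∃ f : ℕ → ℝ, Filter.Tendsto f Filter.atTop (nhds 0) ∧
      ∀ n : ℕ, 2 ≤ n →
        betaMax n ≤ Real.sqrt ((2 + ε) * Real.log n) +
          (∑' k : ℕ, (n : ℝ) ^ ((1 : ℝ) - ((k : ℝ) + 3) / 2) *
            Real.sqrt (((k : ℝ) + 4) * Real.log n)) + f n) ∧
    Filter.limsup (fun n : ℕ => betaMax n / Real.sqrt (2 * Real.log n)) Filter.atTop ≤ 1 := by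
  constructor
  · intro ε hε
    refine ⟨fun n => max 0 (Real.sqrt (2 * Real.log (2 * n)) -
      Real.sqrt ((2 + ε) * Real.log n)), ?_, ?_⟩
    · -- tends to 0: eventually it is 0
      have hev : (fun n : ℕ => max 0 (Real.sqrt (2 * Real.log (2 * n)) -
          Real.sqrt ((2 + ε) * Real.log n))) =ᶠ[Filter.atTop] (fun _ => (0:ℝ)) := by
        have h1 : ∀ᶠ n : ℕ in Filter.atTop, 2 * Real.log 2 / ε ≤ Real.log n :=
          log_tendsto.eventually_ge_atTop _
        filter_upwards [h1, Filter.eventually_ge_atTop 1] with n hlog hn1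
        have hnpos : (0:ℝ) < n := by exact_mod_cast hn1
        have hlogn : 0 ≤ Real.log n := le_trans (by positivity) hlog
        have key : 2 * Real.log (2 * n) ≤ (2 + ε) * Real.log n := by
          rw [Real.log_mul two_ne_zero (by positivity)]
          have : 2 * Real.log 2 ≤ ε * Real.log n := by
            rw [div_le_iff₀ hε] at hlog; linarith
          linarith
        have : Real.sqrt (2 * Real.log (2 * n)) ≤ Real.sqrt ((2 + ε) * Real.log n) :=
          Real.sqrt_le_sqrt key
        exact max_eq_left (sub_nonpos.2 this)
      exact Filter.Tendsto.congr' hev.symm tendsto_const_nhds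
    · intro n hn
      have h1 : betaMax n ≤ Real.sqrt (2 * Real.log (2 * n)) := betaMax_le (by omega)
      have h2 : Real.sqrt (2 * Real.log (2 * n)) - Real.sqrt ((2 + ε) * Real.log n) ≤
          max 0 (Real.sqrt (2 * Real.log (2 * n)) - Real.sqrt ((2 + ε) * Real.log n)) :=
        le_max_right _ _
      have h3 : 0 ≤ ∑' k : ℕ, (n : ℝ) ^ ((1 : ℝ) - ((k : ℝ) + 3) / 2) *
          Real.sqrt (((k : ℝ) + 4) * Real.log n) :=
        tsum_nonneg fun k => mul_nonneg (Real.rpow_nonneg (Nat.cast_nonneg n) _)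
          (Real.sqrt_nonneg _)
      linarith
  · -- limsup part
    set u := fun n : ℕ => betaMax n / Real.sqrt (2 * Real.log n)
    set g := fun n : ℕ => Real.sqrt (2 * Real.log (2 * n)) / Real.sqrt (2 * Real.log n)
    have hg : Filter.Tendsto g Filter.atTop (nhds 1) := by
      have h0 : Filter.Tendsto (fun n : ℕ => Real.log 2 / Real.log n) Filter.atTop (nhds 0) :=
        Filter.Tendsto.div_atTop tendsto_const_nhds log_tendsto
      have hsum : Filter.Tendsto (fun n : ℕ => 1 + Real.log 2 / Real.log n)
          Filter.atTop (nhds 1) := by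
        simpa using (tendsto_const_nhds.add h0 : Filter.Tendsto
          (fun n : ℕ => 1 + Real.log 2 / Real.log n) Filter.atTop (nhds (1 + 0)))
      have h1 : Filter.Tendsto (fun n : ℕ => Real.sqrt (1 + Real.log 2 / Real.log n))
          Filter.atTop (nhds 1) := by
        simpa [Function.comp_def] using (Real.continuous_sqrt.tendsto 1).comp hsum
      apply Filter.Tendsto.congr' _ h1
      filter_upwards [Filter.eventually_ge_atTop 2] with n hn
      have hnpos : (0:ℝ) < n := by exact_mod_cast Nat.lt_of_lt_of_le Nat.zero_lt_two hn
      have hlogn : 0 < Real.log n := Real.log_pos (by exact_mod_cast hn)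
      have hrw : 1 + Real.log 2 / Real.log n = (2 * Real.log (2 * n)) / (2 * Real.log n) := by
        rw [Real.log_mul two_ne_zero (by positivity)]
        field_simp
        ring
      have hn2 : (2:ℝ) ≤ n := by exact_mod_cast hn
      have h2n : 0 < Real.log (2 * n) := Real.log_pos (by nlinarith)
      rw [hrw, Real.sqrt_div (by linarith)]
    have hle : u ≤ᶠ[Filter.atTop] g := by
      filter_upwards [Filter.eventually_ge_atTop 2] with n hn
      have hlogn : 0 < Real.log n := Real.log_pos (by exact_mod_cast hn)
      have hden : 0 < Real.sqrt (2 * Real.log n) := Real.sqrt_pos.2 (by linarith)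
      exact div_le_div_of_nonneg_right (betaMax_le (by omega)) hden.le
    have hcb : Filter.IsCoboundedUnder (· ≤ ·) Filter.atTop u := by
      apply Filter.isCoboundedUnder_le_of_eventually_le Filter.atTop (x := 0)
      filter_upwards [Filter.eventually_ge_atTop 1] with n hn
      exact div_nonneg (betaMax_nonneg hn) (Real.sqrt_nonneg _)
    calc Filter.limsup u Filter.atTop ≤ Filter.limsup g Filter.atTop :=
          Filter.limsup_le_limsup hle hcb hg.isBoundedUnder_le
      _ = 1 := hg.limsup_eq
end
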